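/- For any graph G and any integer k ≥ 3, if H is the cycle C_k on k vertices, then μ_int(G ⊙ H) ≤ max{2, μ_int(G)}. -/

import Mathlib

/-- An (improper) interval edge coloring: for every vertex, the set of colors on
incident edges forms an interval of consecutive integers. -/
def IsIntervalColoring {V : Type*} (G : SimpleGraph V) (c : Sym2 V → ℤ) : Prop :=
  ∀ v : V, ∀ a b x : ℤ,
    (∃ u, G.Adj v u ∧ c s(v, u) = a) → (∃ u, G.Adj v u ∧ c s(v, u) = b) →
    a ≤ x → x ≤ b → ∃ u, G.Adj v u ∧ c s(v, u) = x

/-- A coloring is `k`-improper if at every vertex each color appears on at most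
`k` incident edges. -/
def IsKImproper {V : Type*} (G : SimpleGraph V) (c : Sym2 V → ℤ) (k : ℕ) : Prop :=
  ∀ v : V, ∀ q : ℤ, ({u : V | G.Adj v u ∧ c s(v, u) = q}).ncard ≤ k

/-- The interval coloring impropriety `μ_int(G)`: the least `k` such that `G`
admits a `k`-improper interval edge coloring. -/
noncomputable def impropriety {V : Type*} (G : SimpleGraph V) : ℕ :=
  sInf {k : ℕ | ∃ c : Sym2 V → ℤ, IsIntervalColoring G c ∧ IsKImproper G c k}

/-- The maximum degree of a graph. -/
noncomputable def maxDeg {V : Type*} (G : SimpleGraph V) : ℕ :=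
  sSup {d : ℕ | ∃ v : V, (G.neighborSet v).ncard = d}

/-- The corona product `G ⊙ H`: take `G` and one copy of `H` for every vertex
of `G`, joining each vertex `v` of `G` to all vertices of its copy of `H`. -/
def corona {V W : Type*} (G : SimpleGraph V) (H : SimpleGraph W) :
    SimpleGraph (V ⊕ V × W) where
  Adj x y :=
    match x, y with
    | Sum.inl u, Sum.inl v => G.Adj u v
    | Sum.inl u, Sum.inr p => u = p.1
    | Sum.inr p, Sum.inl u => u = p.1
    | Sum.inr p, Sum.inr q => p.1 = q.1 ∧ H.Adj p.2 q.2
  symm := by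
    refine ⟨?_⟩
    rintro (u | p) (v | q) h
    · exact h.symm
    · exact h
    · exact h
    · exact ⟨h.1.symm, h.2.symm⟩
  loopless := by
    refine ⟨?_⟩
    rintro (u | p) h
    · exact G.irrefl h
    · exact H.irrefl h.2

/-!
Take a `μ_int(G)`-improper interval coloring of `G` and let `a v` be the least color at `v`.
The copy of the cycle at `v` hangs below `a v`: the edge from `v` to a cycle vertex of depth `d`
gets color `a v - 1 - d`, where the depths run `0, 1, 2, …` up and back down around the cycle,
so every depth occurs at most twice and the colors at `v` still form an interval. A cycle edge
gets the lower of the colors of the pendant edges at its ends, or one more than that color when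
both are equal. Depths of neighbours differ by at most one, so a cycle vertex sees colors in
`{t - 1, t, t + 1}`, `t` being the color of its pendant edge; `t` recurs on a cycle edge only
towards a shallower neighbour, so it is used at most twice once the greatest depth is attained
at two adjacent vertices.
-/

open Set SimpleGraph

theorem Set.OrdConnected.union_of_lt {α : Type*} [LinearOrder α] {S T : Set α} {a : α}
    (hS : S.OrdConnected) (hSa : S ⊆ Ici a) (haS : S.Nonempty → a ∈ S)
    (hT : (T ∪ Ici a).OrdConnected) (hTa : T ⊆ Iio a) : (T ∪ S).OrdConnected := by
  refine ⟨fun x hx y hy z hz => ?_⟩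
  rcases lt_or_ge z a with hza | haz
  · have hxT : x ∈ T := hx.resolve_right fun hxS => (hz.1.trans_lt hza).not_ge (hSa hxS)
    have hzT := hT.out (Or.inl hxT) (Or.inr le_rfl : a ∈ T ∪ Ici a) ⟨hz.1, hza.le⟩
    exact Or.inl (hzT.resolve_right hza.not_ge)
  · have hyS : y ∈ S := hy.resolve_left fun hyT => (haz.trans hz.2).not_gt (hTa hyT)
    exact Or.inr (hS.out (haS ⟨y, hyS⟩) hyS ⟨haz, hz.2⟩)

theorem Set.OrdConnected.image_const_add {α : Type*} [AddGroup α] [Preorder α] [AddLeftMono α]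
    {S : Set α} (hS : S.OrdConnected) (a : α) :
    ((a + ·) '' S).OrdConnected :=
  ordConnected_image (OrderIso.addLeft a)

theorem Int.ordConnected_of_subset_Icc {S : Set ℤ} {t : ℤ} (hS : S ⊆ Icc (t - 1) (t + 1))
    (ht : t ∈ S) : S.OrdConnected := by
  refine ⟨fun x hx y hy z hz => ?_⟩
  have := hS hx; have := hS hy; have := hz.1; have := hz.2
  obtain rfl | rfl | rfl : z = x ∨ z = t ∨ z = y := by simp only [mem_Icc] at *; omega
  exacts [hx, ht, hy]

theorem Set.Finite.exists_mem_lowerBounds {α : Type*} [LinearOrder α] [Nonempty α] {S : Set α}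
    (hS : S.Finite) : ∃ a ∈ lowerBounds S, S.Nonempty → a ∈ S := by
  obtain hS₀ | hne := S.eq_empty_or_nonempty
  · exact ⟨Classical.arbitrary α, by simp [hS₀], fun h => absurd hS₀ h.ne_empty⟩
  · obtain ⟨a, haS, ha⟩ := S.exists_min_image id hS hne
    exact ⟨a, ha, fun _ => haS⟩

theorem Set.ncard_pair_le {α : Type*} (a b : α) : ({a, b} : Set α).ncard ≤ 2 :=
  (ncard_insert_le a {b}).trans (by rw [ncard_singleton])

theorem Fin.val_add_one_eq_ite {n : ℕ} (j : Fin (n + 1)) :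
    ((j + 1 : Fin (n + 1)) : ℕ) = if (j : ℕ) = n then 0 else (j : ℕ) + 1 := by
  rw [Fin.val_add_one]; simp only [Fin.ext_iff, Fin.val_last]

theorem Fin.val_sub_one_eq_ite {n : ℕ} (j : Fin (n + 1)) :
    ((j - 1 : Fin (n + 1)) : ℕ) = if (j : ℕ) = 0 then n else (j : ℕ) - 1 := by
  rw [Fin.coe_sub_one]; simp only [Fin.ext_iff, Fin.val_zero]

theorem SimpleGraph.cycleGraph_adj_iff_eq_sub_one_or_eq_add_one {n : ℕ} (j u : Fin (n + 2)) :
    (cycleGraph (n + 2)).Adj j u ↔ u = j - 1 ∨ u = j + 1 := by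
  rw [← mem_neighborSet, cycleGraph_neighborSet]
  rfl

section Coloring

variable {V : Type*} (G : SimpleGraph V) (c : Sym2 V → ℤ)

theorem isIntervalColoring_iff_ordConnected :
    IsIntervalColoring G c ↔ ∀ v, ((fun u => c s(v, u)) '' G.neighborSet v).OrdConnected := by
  simp only [IsIntervalColoring, ordConnected_def, subset_def, mem_Icc, mem_image,
    mem_neighborSet]
  constructor
  · rintro h v _ ⟨u, hu, rfl⟩ _ ⟨w, hw, rfl⟩ x ⟨hux, hxw⟩
    exact h v _ _ x ⟨u, hu, rfl⟩ ⟨w, hw, rfl⟩ hux hxw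
  · rintro h v a b x ⟨u, hu, rfl⟩ ⟨w, hw, rfl⟩ hux hxw
    exact h v ⟨u, hu, rfl⟩ ⟨w, hw, rfl⟩ x ⟨hux, hxw⟩

theorem exists_isIntervalColoring_isKImproper_impropriety [Finite V] :
    ∃ c, IsIntervalColoring G c ∧ IsKImproper G c (impropriety G) := by
  refine Nat.sInf_mem (s := {k | ∃ c, IsIntervalColoring G c ∧ IsKImproper G c k})
    ⟨Nat.card V, fun _ => 0, ?_, fun v q => ?_⟩
  · rw [isIntervalColoring_iff_ordConnected]
    refine fun v => ⟨?_⟩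
    rintro _ ⟨u, hu, rfl⟩ _ ⟨_, _, rfl⟩ z ⟨hz₁, hz₂⟩
    exact ⟨u, hu, le_antisymm hz₁ hz₂⟩
  · exact (ncard_le_ncard (subset_univ _)).trans (ncard_univ V).le

end Coloring

/-- An interval coloring of the cone `K₁ + H` in which the apex sees the colors of an interval
ending at `-1`: `p w` colors the edge from the apex to `w`, and `q` the edges of `H`. -/
structure IsConeColoring {W : Type*} (H : SimpleGraph W) (K : ℕ) (p : W → ℤ)
    (q : Sym2 W → ℤ) : Prop where
  apex_neg : ∀ w, p w < 0
  apex_ordConnected : (range p ∪ Ici (0 : ℤ)).OrdConnected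
  apex_improper : ∀ x, {w | p w = x}.ncard ≤ K
  ordConnected : ∀ w, (insert (p w) ((fun u => q s(w, u)) '' H.neighborSet w)).OrdConnected
  improper : ∀ w x, {u | H.Adj w u ∧ q s(w, u) = x}.ncard ≤ K
  improper_apex_color : ∀ w, {u | H.Adj w u ∧ q s(w, u) = p w}.ncard < K

section Corona

variable {V W : Type*} {G : SimpleGraph V} {H : SimpleGraph W} {K : ℕ}
  (c : Sym2 V → ℤ) (a : V → ℤ) (p : W → ℤ) (q : Sym2 W → ℤ)

def coronaColoring : Sym2 (V ⊕ V × W) → ℤ :=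
  Sym2.lift ⟨fun x y =>
    match x, y with
    | .inl u, .inl u' => c s(u, u')
    | .inl _, .inr y => a y.1 + p y.2
    | .inr x, .inl _ => a x.1 + p x.2
    -- `min` only makes this symmetric: edges inside the copies have `x.1 = y.1`.
    | .inr x, .inr y => min (a x.1) (a y.1) + q s(x.2, y.2),
    by
      rintro (u | x) (u' | y)
      · exact congrArg c Sym2.eq_swap
      · rfl
      · rfl
      · exact congrArg₂ (· + ·) (min_comm (a x.1) (a y.1)) (congrArg q Sym2.eq_swap)⟩

@[simp] theorem coronaColoring_inl_inl (u u' : V) :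
    coronaColoring c a p q s(.inl u, .inl u') = c s(u, u') := rfl

@[simp] theorem coronaColoring_inl_inr (u : V) (y : V × W) :
    coronaColoring c a p q s(.inl u, .inr y) = a y.1 + p y.2 := rfl

@[simp] theorem coronaColoring_inr_inr (x y : V × W) :
    coronaColoring c a p q s(.inr x, .inr y) = min (a x.1) (a y.1) + q s(x.2, y.2) := rfl

theorem coronaColoring_colors_inl (v : V) :
    (fun y => coronaColoring c a p q s(.inl v, y)) '' (corona G H).neighborSet (.inl v) =
      (a v + ·) '' range p ∪ (fun u => c s(v, u)) '' G.neighborSet v := by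
  ext x
  constructor
  · rintro ⟨u | ⟨v', w⟩, hy, rfl⟩
    · exact Or.inr ⟨u, hy, rfl⟩
    · obtain rfl : v = v' := hy
      exact Or.inl ⟨p w, mem_range_self w, rfl⟩
  · rintro (⟨_, ⟨w, rfl⟩, rfl⟩ | ⟨u, hu, rfl⟩)
    · exact ⟨.inr (v, w), rfl, rfl⟩
    · exact ⟨.inl u, hu, rfl⟩

theorem coronaColoring_colors_inr (v : V) (w : W) :
    (fun y => coronaColoring c a p q s(.inr (v, w), y)) ''
        (corona G H).neighborSet (.inr (v, w)) =
      (a v + ·) '' insert (p w) ((fun u => q s(w, u)) '' H.neighborSet w) := by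
  ext x
  constructor
  · rintro ⟨u | ⟨v', u⟩, hy, rfl⟩
    · obtain rfl : u = v := hy
      exact ⟨p w, mem_insert _ _, rfl⟩
    · obtain ⟨rfl, hwu⟩ : v = v' ∧ H.Adj w u := hy
      exact ⟨q s(w, u), mem_insert_of_mem _ ⟨u, hwu, rfl⟩, by simp⟩
  · rintro ⟨_, rfl | ⟨u, hu, rfl⟩, rfl⟩
    · exact ⟨.inl v, rfl, rfl⟩
    · exact ⟨.inr (v, u), ⟨rfl, hu⟩, by simp⟩

variable {c a p q}

theorem coronaColoring_isIntervalColoring (hcone : IsConeColoring H K p q)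
    (hc : IsIntervalColoring G c)
    (ha : ∀ v, a v ∈ lowerBounds ((fun u => c s(v, u)) '' G.neighborSet v))
    (ha' : ∀ v, ((fun u => c s(v, u)) '' G.neighborSet v).Nonempty →
      a v ∈ (fun u => c s(v, u)) '' G.neighborSet v) :
    IsIntervalColoring (corona G H) (coronaColoring c a p q) := by
  rw [isIntervalColoring_iff_ordConnected] at hc ⊢
  rintro (v | ⟨v, w⟩)
  · rw [coronaColoring_colors_inl]
    refine (hc v).union_of_lt (fun x hx => ha v hx) (ha' v) ?_ ?_
    · rw [show Ici (a v) = (a v + ·) '' Ici 0 by simp, ← image_union]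
      exact hcone.apex_ordConnected.image_const_add _
    · rintro _ ⟨_, ⟨w, rfl⟩, rfl⟩
      exact add_lt_of_neg_right _ (hcone.apex_neg w)
  · rw [coronaColoring_colors_inr]
    exact (hcone.ordConnected w).image_const_add _

theorem coronaColoring_isKImproper [Finite V] [Finite W] (hcone : IsConeColoring H K p q)
    {m : ℕ} (hc : IsKImproper G c m)
    (ha : ∀ v, a v ∈ lowerBounds ((fun u => c s(v, u)) '' G.neighborSet v)) :
    IsKImproper (corona G H) (coronaColoring c a p q) (max K m) := by
  rintro (v | ⟨v, w⟩) x
  · rcases le_or_gt (a v) x with hax | hxa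
    · calc _ ≤ (Sum.inl '' {u | G.Adj v u ∧ c s(v, u) = x}).ncard := ncard_le_ncard ?_
        _ ≤ m := (ncard_image_le).trans (hc v x)
        _ ≤ max K m := le_max_right _ _
      rintro (u | ⟨v', w⟩) ⟨hy, hx⟩
      · exact ⟨u, ⟨hy, hx⟩, rfl⟩
      · obtain rfl : v = v' := hy
        have := hcone.apex_neg w
        simp only [coronaColoring_inl_inr] at hx
        omega
    · calc _ ≤ ((fun w => Sum.inr (v, w)) '' {w | p w = x - a v}).ncard := ncard_le_ncard ?_
        _ ≤ K := (ncard_image_le).trans (hcone.apex_improper _)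
        _ ≤ max K m := le_max_left _ _
      rintro (u | ⟨v', w⟩) ⟨hy, hx⟩
      · have : a v ≤ c s(v, u) := ha v ⟨u, hy, rfl⟩
        simp only [coronaColoring_inl_inl] at hx
        omega
      · obtain rfl : v = v' := hy
        simp only [coronaColoring_inl_inr] at hx
        exact ⟨w, show p w = x - a v by omega, rfl⟩
  · refine le_trans ?_ (le_max_left _ _)
    set S := {u | H.Adj w u ∧ q s(w, u) = x - a v}
    have hY : ∀ y ∈ {y | (corona G H).Adj (.inr (v, w)) y ∧
        coronaColoring c a p q s(.inr (v, w), y) = x},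
          (y = .inl v ∧ x = a v + p w) ∨ y ∈ (fun u => Sum.inr (v, u)) '' S := by
      rintro (u | ⟨v', u⟩) ⟨hy, hx⟩
      · obtain rfl : u = v := hy
        exact Or.inl ⟨rfl, hx.symm⟩
      · obtain ⟨rfl, hwu⟩ : v = v' ∧ H.Adj w u := hy
        simp only [coronaColoring_inr_inr, min_self] at hx
        exact Or.inr ⟨u, ⟨hwu, by omega⟩, rfl⟩
    by_cases hx : x = a v + p w
    · calc _ ≤ (insert (.inl v) ((fun u => Sum.inr (v, u)) '' S)).ncard :=
            ncard_le_ncard fun y hy => (hY y hy).imp_left And.left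
        _ ≤ S.ncard + 1 := (ncard_insert_le _ _).trans (Nat.add_le_add_right (ncard_image_le) _)
        _ ≤ K := by subst hx; simpa [S] using hcone.improper_apex_color w
    · calc _ ≤ ((fun u => Sum.inr (v, u)) '' S).ncard :=
            ncard_le_ncard fun y hy => (hY y hy).resolve_left fun h => hx h.2
        _ ≤ K := (ncard_image_le).trans (hcone.improper w _)

end Corona

theorem impropriety_corona_le {V W : Type*} [Finite V] [Finite W] (G : SimpleGraph V)
    {H : SimpleGraph W} {K : ℕ} {p : W → ℤ} {q : Sym2 W → ℤ} (hcone : IsConeColoring H K p q) :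
    impropriety (corona G H) ≤ max K (impropriety G) := by
  obtain ⟨c, hcI, hcK⟩ := exists_isIntervalColoring_isKImproper_impropriety G
  choose a ha ha' using fun v =>
    ((toFinite (G.neighborSet v)).image fun u => c s(v, u)).exists_mem_lowerBounds
  exact Nat.sInf_le ⟨coronaColoring c a p q,
    coronaColoring_isIntervalColoring hcone hcI ha ha', coronaColoring_isKImproper hcone hcK ha⟩

section LevelColoring

variable {W : Type*} (p : W → ℤ)

def levelEdgeColoring : Sym2 W → ℤ :=
  Sym2.lift ⟨fun u w => if p u = p w then p u + 1 else min (p u) (p w), fun u w => by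
    by_cases h : p u = p w
    · simp [h]
    · simp [h, Ne.symm h, min_comm]⟩

@[simp] theorem levelEdgeColoring_mk (u w : W) :
    levelEdgeColoring p s(u, w) = if p u = p w then p u + 1 else min (p u) (p w) := rfl

theorem levelEdgeColoring_eq_left_iff (w u : W) :
    levelEdgeColoring p s(w, u) = p w ↔ p w < p u := by
  simp only [levelEdgeColoring_mk]
  split_ifs <;> omega

theorem levelEdgeColoring_ordConnected {H : SimpleGraph W} {w : W}
    (hp : ∀ u, H.Adj w u → |p u - p w| ≤ 1) :
    (insert (p w) ((fun u => levelEdgeColoring p s(w, u)) '' H.neighborSet w)).OrdConnected := by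
  refine Int.ordConnected_of_subset_Icc (insert_subset ⟨by omega, by omega⟩ ?_) (mem_insert _ _)
  rintro _ ⟨u, hu, rfl⟩
  have := abs_le.1 (hp u hu)
  simp only [levelEdgeColoring_mk, mem_Icc]
  split_ifs <;> omega

end LevelColoring

section Cycle

/-- `-1 - d`, where the depth `d` runs `0, 1, …, m, m, …, 1` (odd `k`) or `0, 1, …, m, m, …, 1, 0`
(even `k`) around the cycle, so that no vertex is deeper than both of its neighbours. -/
def cycleLevel (k : ℕ) (j : Fin k) : ℤ := -1 - min (j : ℤ) (k - 1 + k % 2 - j)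

variable (n : ℕ)

theorem abs_cycleLevel_add_one_sub (j : Fin (n + 3)) :
    |cycleLevel (n + 3) (j + 1) - cycleLevel (n + 3) j| ≤ 1 := by
  have := j.isLt
  rw [cycleLevel, cycleLevel, Fin.val_add_one_eq_ite, abs_le]
  split_ifs <;> push_cast <;> omega

theorem not_cycleLevel_lt_add_one_of_lt_sub_one (j : Fin (n + 3))
    (h : cycleLevel (n + 3) j < cycleLevel (n + 3) (j - 1)) :
    ¬ cycleLevel (n + 3) j < cycleLevel (n + 3) (j + 1) := by
  have := j.isLt
  simp only [cycleLevel] at h ⊢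
  rw [Fin.val_sub_one_eq_ite] at h
  rw [Fin.val_add_one_eq_ite]
  split_ifs at h ⊢ <;> push_cast at h ⊢ <;> omega

theorem isConeColoring_cycleGraph :
    IsConeColoring (cycleGraph (n + 3)) 2 (cycleLevel (n + 3))
      (levelEdgeColoring (cycleLevel (n + 3))) where
  apex_neg j := by
    have := j.isLt
    simp only [cycleLevel]
    omega
  apex_ordConnected := by
    refine ⟨fun x hx y _ z hz => (le_or_gt 0 z).elim Or.inr fun hz0 => Or.inl ?_⟩
    obtain ⟨j, rfl⟩ := hx.resolve_right fun hx0 => (hz0.trans_le' hz.1).not_ge hx0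
    have := j.isLt
    have := hz.1
    simp only [cycleLevel] at this
    exact ⟨⟨(-1 - z).toNat, by omega⟩, by simp only [cycleLevel]; omega⟩
  apex_improper x := by
    refine (ncard_le_ncard_of_injOn (fun j : Fin (n + 3) => (j : ℤ))
      (t := {-1 - x, n + 2 + (n + 3) % 2 + 1 + x}) ?_ (Nat.cast_injective.comp
        Fin.val_injective |>.injOn) (toFinite _)).trans (ncard_pair_le _ _)
    intro j hj
    have := j.isLt
    simp only [mem_ofPred_eq, cycleLevel] at hj
    simp only [mem_insert_iff, mem_singleton_iff]
    omega
  ordConnected j := by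
    refine levelEdgeColoring_ordConnected _ fun u hu => ?_
    obtain rfl | rfl := (cycleGraph_adj_iff_eq_sub_one_or_eq_add_one j u).1 hu
    · simpa [abs_sub_comm] using abs_cycleLevel_add_one_sub n (j - 1)
    · exact abs_cycleLevel_add_one_sub n j
  improper j x := by
    refine (ncard_le_ncard (t := {j - 1, j + 1}) fun u hu => ?_).trans (ncard_pair_le _ _)
    exact (cycleGraph_adj_iff_eq_sub_one_or_eq_add_one j u).1 hu.1
  improper_apex_color j := by
    refine Nat.lt_succ_of_le ((ncard_le_one).2 ?_)
    simp only [mem_ofPred_eq, cycleGraph_adj_iff_eq_sub_one_or_eq_add_one,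
      levelEdgeColoring_eq_left_iff]
    have := not_cycleLevel_lt_add_one_of_lt_sub_one n j
    rintro _ ⟨rfl | rfl, h₁⟩ _ ⟨rfl | rfl, h₂⟩ <;> tauto

end Cycle

/-- For any graph `G` and any `k ≥ 3`, `μ_int(G ⊙ C_k) ≤ max {2, μ_int(G)}`. -/
theorem stmt13 {V : Type*} [Fintype V] (G : SimpleGraph V) (k : ℕ) (hk : 3 ≤ k) :
    impropriety (corona G (SimpleGraph.cycleGraph k)) ≤ max 2 (impropriety G) := by
  obtain ⟨n, rfl⟩ : ∃ n, k = n + 3 := ⟨k - 3, by omega⟩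
  exact impropriety_corona_le G (isConeColoring_cycleGraph n)
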